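/- (Primal recovery from dual optimizers.) Assume p_i > 0 for all i, q_j > 0 for all j, ε > 0, and Π(p,q;M) ≠ ∅. Let (φ*, ψ*) maximize the dual objective D(φ,ψ) = Σ_i φ_i p_i + Σ_j ψ_j q_j − (1/(4ε)) Σ_{i,j} M_{i,j} ((φ_i + ψ_j − G_{i,j})_+)² p_i q_j over ℝ^m × ℝ^n. Then the matrix T* defined by T*_{i,j} = (1/(2ε)) M_{i,j} (φ*_i + ψ*_j − G_{i,j})_+ p_i q_j satisfies T* = M⊙π* for a minimizer π* of the L2-regularized primal problem min_{π ∈ Π(p,q;M)} [ Σ_{i,j} M_{i,j}π_{i,j}G_{i,j} + ε Σ_{i,j} (M_{i,j}π_{i,j})²/(p_i q_j) ]; in particular T* has marginals T*1_n = p and (T*)^T 1_m = q. -/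

import Mathlib

open Finset

noncomputable section

variable {m n : ℕ}

/-- Mask matrix determined by the keypoint pair set `K`:
`M i j = 1` if `(i,j) ∈ K`; `M i j = 0` if `i ∈ I` or `j ∈ J` but `(i,j) ∉ K`;
`M i j = 1` otherwise. -/
def mask (K : Finset (Fin m × Fin n)) : Matrix (Fin m) (Fin n) ℝ :=
  fun i j =>
    if (i, j) ∈ K then 1
    else if (∃ j', (i, j') ∈ K) ∨ (∃ i', (i', j) ∈ K) then 0
    else 1

/-- The masked feasible set `Π(p, q; M)`. -/
def PiM (M : Matrix (Fin m) (Fin n) ℝ) (p : Fin m → ℝ) (q : Fin n → ℝ) :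
    Set (Matrix (Fin m) (Fin n) ℝ) :=
  {π | (∀ i j, 0 ≤ π i j) ∧ (∀ i, ∑ j, M i j * π i j = p i) ∧
    (∀ j, ∑ i, M i j * π i j = q j)}

/-- The `L₂`-regularized KPG-RL primal objective
`Σ_{i,j} M_{i,j} π_{i,j} G_{i,j} + ε Σ_{i,j} (M_{i,j} π_{i,j})² / (p_i q_j)`. -/
def primObj (K : Finset (Fin m × Fin n)) (G : Matrix (Fin m) (Fin n) ℝ) (ε : ℝ)
    (p : Fin m → ℝ) (q : Fin n → ℝ) (π : Matrix (Fin m) (Fin n) ℝ) : ℝ :=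
  ∑ i, ∑ j, mask K i j * π i j * G i j
    + ε * ∑ i, ∑ j, (mask K i j * π i j) ^ 2 / (p i * q j)

/-- The dual objective
`Σ_i φ_i p_i + Σ_j ψ_j q_j − (1/(4ε)) Σ_{i,j} M_{i,j} ((φ_i + ψ_j − G_{i,j})₊)² p_i q_j`. -/
def dualObj (K : Finset (Fin m × Fin n)) (G : Matrix (Fin m) (Fin n) ℝ) (ε : ℝ)
    (p : Fin m → ℝ) (q : Fin n → ℝ) (φ : Fin m → ℝ) (ψ : Fin n → ℝ) : ℝ :=
  ∑ i, φ i * p i + ∑ j, ψ j * q j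
    - (1 / (4 * ε)) * ∑ i, ∑ j,
        mask K i j * max (φ i + ψ j - G i j) 0 ^ 2 * (p i * q j)

/-- The candidate optimal masked plan recovered from dual optimizers:
`T_{i,j} = (1/(2ε)) M_{i,j} (φ_i + ψ_j − G_{i,j})₊ p_i q_j`. -/
def Tstar (K : Finset (Fin m × Fin n)) (G : Matrix (Fin m) (Fin n) ℝ) (ε : ℝ)
    (p : Fin m → ℝ) (q : Fin n → ℝ) (φ : Fin m → ℝ) (ψ : Fin n → ℝ) :
    Matrix (Fin m) (Fin n) ℝ :=
  fun i j => (1 / (2 * ε)) * mask K i j * max (φ i + ψ j - G i j) 0 * (p i * q j)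

lemma aux_small (C A : ℝ) (hC : 0 < C) (h : ∀ t : ℝ, t * A ≤ t ^ 2 * C) : A = 0 := by
  have h1 := h (A / (2 * C))
  have h2 : (A / (2 * C)) * A = A^2 / (2*C) := by ring
  have h3 : (A / (2 * C))^2 * C = A^2 / (4*C) := by field_simp; ring
  rw [h2, h3] at h1
  have h4 : A^2/(2*C) - A^2/(4*C) = A^2/(4*C) := by field_simp; ring
  have h5 : A^2/(4*C) = 0 := le_antisymm (by linarith) (by positivity)
  field_simp at h5; simpa using h5

lemma upper_q (x t : ℝ) : max (x + t) 0 ^ 2 ≤ max x 0 ^ 2 + 2*t*(max x 0) + t^2 := by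
  rcases le_total x 0 with hx | hx
  · rw [max_eq_right hx]
    rcases le_total (x + t) 0 with h | h
    · rw [max_eq_right h]; nlinarith
    · rw [max_eq_left h]; nlinarith
  · rw [max_eq_left hx]
    rcases le_total (x + t) 0 with h | h
    · rw [max_eq_right h]; nlinarith
    · rw [max_eq_left h]; nlinarith

lemma point_ineq (ε w φ ψ g a : ℝ) (hε : 0 < ε) (hw : 0 < w) (ha : 0 ≤ a) :
    0 ≤ a * g - φ * a - ψ * a + ε * (a^2 / w) + (1/(4*ε)) * ((max (φ + ψ - g) 0)^2 * w) := by
  set c := φ + ψ - g with hc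
  set X := a * g - φ * a - ψ * a + ε * (a^2 / w) + (1/(4*ε)) * ((max c 0)^2 * w) with hX
  have hXk : X * (4*ε*w) = (2*ε*a - max c 0 * w)^2 + 4*ε*w*a*(max c 0 - c) := by
    rw [hX, hc]; field_simp; ring
  have h5 : 0 ≤ X * (4*ε*w) := by
    rw [hXk]
    have hmc : 0 ≤ max c 0 - c := by simp
    have h6 : 0 ≤ 4*ε*w*a*(max c 0 - c) :=
      mul_nonneg (mul_nonneg (by positivity) ha) hmc
    nlinarith [sq_nonneg (2*ε*a - max c 0 * w)]
  by_contra hcon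
  push_neg at hcon
  nlinarith [mul_pos (mul_pos (by norm_num : (0:ℝ) < 4) hε) hw]

lemma point_eq (ε w φ ψ g : ℝ) (hε : 0 < ε) (hw : 0 < w) :
    ((1/(2*ε)) * max (φ+ψ-g) 0 * w) * g - φ * ((1/(2*ε)) * max (φ+ψ-g) 0 * w)
      - ψ * ((1/(2*ε)) * max (φ+ψ-g) 0 * w)
      + ε * (((1/(2*ε)) * max (φ+ψ-g) 0 * w)^2 / w)
      + (1/(4*ε)) * ((max (φ+ψ-g) 0)^2 * w) = 0 := by
  set c := φ + ψ - g with hc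
  have hcc : max c 0 * (max c 0 - c) = 0 := by
    rcases le_total c 0 with h | h
    · rw [max_eq_right h]; ring
    · rw [max_eq_left h]; ring
  have hg : g = φ + ψ - c := by rw [hc]; ring
  have key : ((1/(2*ε)) * max c 0 * w) * g - φ * ((1/(2*ε)) * max c 0 * w)
      - ψ * ((1/(2*ε)) * max c 0 * w)
      + ε * (((1/(2*ε)) * max c 0 * w)^2 / w)
      + (1/(4*ε)) * ((max c 0)^2 * w)
      = (w/(2*ε)) * (max c 0 * (max c 0 - c)) := by
    rw [hg]; field_simp; ring
  rw [key, hcc, mul_zero]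


set_option maxHeartbeats 1000000 in
/-- Primal recovery from dual optimizers: if `(φ*, ψ*)` maximizes
the dual objective, then `T* = M ⊙ π*` for some minimizer `π*` of the
`L₂`-regularized primal problem; in particular `T*` has marginals `p` and `q`. -/
theorem kpg_rl_L2_primal_recovery
    (p : Fin m → ℝ) (q : Fin n → ℝ) (K : Finset (Fin m × Fin n))
    (G : Matrix (Fin m) (Fin n) ℝ) (ε : ℝ)
    (hp : ∀ i, 0 < p i) (hps : ∑ i, p i = 1)
    (hq : ∀ j, 0 < q j) (hqs : ∑ j, q j = 1)
    (hK1 : ∀ a ∈ K, ∀ b ∈ K, a.1 = b.1 → a = b)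
    (hK2 : ∀ a ∈ K, ∀ b ∈ K, a.2 = b.2 → a = b)
    (hε : 0 < ε) (hne : (PiM (mask K) p q).Nonempty)
    (φs : Fin m → ℝ) (ψs : Fin n → ℝ)
    (hmax : ∀ (φ : Fin m → ℝ) (ψ : Fin n → ℝ),
      dualObj K G ε p q φ ψ ≤ dualObj K G ε p q φs ψs) :
    (∃ π ∈ PiM (mask K) p q,
      (∀ π' ∈ PiM (mask K) p q, primObj K G ε p q π ≤ primObj K G ε p q π')
      ∧ ∀ i j, Tstar K G ε p q φs ψs i j = mask K i j * π i j)
    ∧ (∀ i, ∑ j, Tstar K G ε p q φs ψs i j = p i)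
    ∧ (∀ j, ∑ i, Tstar K G ε p q φs ψs i j = q j) := by
  have hε4 : (0:ℝ) < 1/(4*ε) := by positivity
  have hm01 : ∀ i j, mask K i j = 0 ∨ mask K i j = 1 := fun i j => by
    unfold mask; split_ifs <;> simp
  have hmnn : ∀ i j, (0:ℝ) ≤ mask K i j := fun i j => by
    rcases hm01 i j with h | h <;> rw [h] <;> norm_num
  have hm1 : ∀ i j, mask K i j ≤ 1 := fun i j => by
    rcases hm01 i j with h | h <;> rw [h] <;> norm_num
  have hTnn : ∀ i j, 0 ≤ Tstar K G ε p q φs ψs i j := fun i j =>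
    mul_nonneg (mul_nonneg (mul_nonneg (by positivity) (hmnn i j)) (le_max_right _ _))
      (mul_pos (hp i) (hq j)).le
  have hTM : ∀ i j, mask K i j * Tstar K G ε p q φs ψs i j = Tstar K G ε p q φs ψs i j :=
    fun i j => by rcases hm01 i j with h | h <;> simp [Tstar, h]
  -- row marginals
  have hrow : ∀ i, ∑ j, Tstar K G ε p q φs ψs i j = p i := by
    intro i
    have hpile : p i ≤ 1 := by
      rw [← hps]
      exact Finset.single_le_sum (fun i' _ => (hp i').le) (Finset.mem_univ i)
    have key : ∀ t : ℝ, t * (p i - ∑ j, Tstar K G ε p q φs ψs i j) ≤ t^2 * (1/(4*ε)) := by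
      intro t
      have h := hmax (Function.update φs i (φs i + t)) ψs
      unfold dualObj at h
      have e1 : ∑ i', Function.update φs i (φs i + t) i' * p i'
          = (∑ i', φs i' * p i') + t * p i := by
        have hcongr : ∀ i' ∈ Finset.univ, Function.update φs i (φs i + t) i' * p i'
            = φs i' * p i' + (if i' = i then t * p i else 0) := by
          intro i' _
          rcases eq_or_ne i' i with rfl | hne
          · simp; ring
          · simp [Function.update_of_ne hne, hne]
        rw [Finset.sum_congr rfl hcongr, Finset.sum_add_distrib,
          Finset.sum_ite_eq' Finset.univ i]
        simp
      rw [e1] at h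
      have e2 : (∑ i', ∑ j, mask K i' j *
            max (Function.update φs i (φs i + t) i' + ψs j - G i' j) 0 ^ 2 * (p i' * q j))
          - (∑ i', ∑ j, mask K i' j * max (φs i' + ψs j - G i' j) 0 ^ 2 * (p i' * q j))
          = ∑ j, (mask K i j * max (φs i + t + ψs j - G i j) 0 ^ 2 * (p i * q j)
              - mask K i j * max (φs i + ψs j - G i j) 0 ^ 2 * (p i * q j)) := by
        rw [← Finset.sum_sub_distrib]
        rw [Finset.sum_eq_single_of_mem i (Finset.mem_univ i)
          (fun b _ hb => by simp [Function.update_of_ne hb])]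
        simp only [Function.update_self]
        rw [← Finset.sum_sub_distrib]
      have hD : ∑ j, (mask K i j * max (φs i + t + ψs j - G i j) 0 ^ 2 * (p i * q j)
              - mask K i j * max (φs i + ψs j - G i j) 0 ^ 2 * (p i * q j))
          ≤ (4*ε*t) * (∑ j, Tstar K G ε p q φs ψs i j) + t^2 * p i := by
        have hMw : ∑ j, mask K i j * (p i * q j) ≤ p i := by
          calc ∑ j, mask K i j * (p i * q j) ≤ ∑ j, 1 * (p i * q j) :=
                Finset.sum_le_sum fun j _ =>
                  mul_le_mul_of_nonneg_right (hm1 i j) (mul_pos (hp i) (hq j)).le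
            _ = p i := by
                simp only [one_mul]
                rw [← Finset.mul_sum, hqs, mul_one]
        calc ∑ j, (mask K i j * max (φs i + t + ψs j - G i j) 0 ^ 2 * (p i * q j)
              - mask K i j * max (φs i + ψs j - G i j) 0 ^ 2 * (p i * q j))
            ≤ ∑ j, ((4*ε*t) * Tstar K G ε p q φs ψs i j + t^2 * (mask K i j * (p i * q j))) := by
              refine Finset.sum_le_sum fun j _ => ?_
              have h1 := upper_q (φs i + ψs j - G i j) t
              have hmw : 0 ≤ mask K i j * (p i * q j) :=
                mul_nonneg (hmnn i j) (mul_pos (hp i) (hq j)).le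
              have hre : φs i + t + ψs j - G i j = (φs i + ψs j - G i j) + t := by ring
              rw [hre]
              have hT : (4*ε*t) * Tstar K G ε p q φs ψs i j
                  = 2*t*(max (φs i + ψs j - G i j) 0) * (mask K i j * (p i * q j)) := by
                unfold Tstar; field_simp; ring
              rw [hT]
              nlinarith [mul_le_mul_of_nonneg_left h1 hmw]
          _ = (4*ε*t) * (∑ j, Tstar K G ε p q φs ψs i j)
              + t^2 * (∑ j, mask K i j * (p i * q j)) := by
              rw [Finset.sum_add_distrib, ← Finset.mul_sum, ← Finset.mul_sum]
          _ ≤ _ := by nlinarith [sq_nonneg t]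
      -- combine
      set Dn := ∑ i', ∑ j, mask K i' j *
          max (Function.update φs i (φs i + t) i' + ψs j - G i' j) 0 ^ 2 * (p i' * q j) with hDn
      set Do := ∑ i', ∑ j, mask K i' j * max (φs i' + ψs j - G i' j) 0 ^ 2 * (p i' * q j) with hDo
      set R := ∑ j, (mask K i j * max (φs i + t + ψs j - G i j) 0 ^ 2 * (p i * q j)
              - mask K i j * max (φs i + ψs j - G i j) 0 ^ 2 * (p i * q j)) with hR
      set S := ∑ j, Tstar K G ε p q φs ψs i j with hS
      have hkd : (1/(4*ε)) * Dn = (1/(4*ε)) * Do + (1/(4*ε)) * R := by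
        have : Dn = Do + R := by linarith [e2]
        rw [this]; ring
      have step1 : t * p i ≤ (1/(4*ε)) * R := by linarith
      have step2 : (1/(4*ε)) * R ≤ (1/(4*ε)) * ((4*ε*t) * S + t^2 * p i) :=
        mul_le_mul_of_nonneg_left hD hε4.le
      have step3 : (1/(4*ε)) * ((4*ε*t) * S + t^2 * p i) = t*S + t^2 * p i * (1/(4*ε)) := by
        field_simp
      have step4 : t^2 * p i * (1/(4*ε)) ≤ t^2 * (1/(4*ε)) := by
        nlinarith [mul_le_mul_of_nonneg_left hpile (mul_nonneg (sq_nonneg t) hε4.le)]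
      have expand : t * (p i - (∑ j, Tstar K G ε p q φs ψs i j)) = t * p i - t * S := by
        rw [hS]; ring
      linarith
    have := aux_small (1/(4*ε)) (p i - ∑ j, Tstar K G ε p q φs ψs i j) hε4 key
    linarith
  -- column marginals
  have hcol : ∀ j, ∑ i, Tstar K G ε p q φs ψs i j = q j := by
    intro j
    have hqjle : q j ≤ 1 := by
      rw [← hqs]
      exact Finset.single_le_sum (fun j' _ => (hq j').le) (Finset.mem_univ j)
    have key : ∀ t : ℝ, t * (q j - ∑ i, Tstar K G ε p q φs ψs i j) ≤ t^2 * (1/(4*ε)) := by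
      intro t
      have h := hmax φs (Function.update ψs j (ψs j + t))
      unfold dualObj at h
      have e1 : ∑ j', Function.update ψs j (ψs j + t) j' * q j'
          = (∑ j', ψs j' * q j') + t * q j := by
        have hcongr : ∀ j' ∈ Finset.univ, Function.update ψs j (ψs j + t) j' * q j'
            = ψs j' * q j' + (if j' = j then t * q j else 0) := by
          intro j' _
          rcases eq_or_ne j' j with rfl | hne
          · simp; ring
          · simp [Function.update_of_ne hne, hne]
        rw [Finset.sum_congr rfl hcongr, Finset.sum_add_distrib,
          Finset.sum_ite_eq' Finset.univ j]
        simp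
      rw [e1] at h
      have e2 : (∑ i', ∑ j', mask K i' j' *
            max (φs i' + Function.update ψs j (ψs j + t) j' - G i' j') 0 ^ 2 * (p i' * q j'))
          - (∑ i', ∑ j', mask K i' j' * max (φs i' + ψs j' - G i' j') 0 ^ 2 * (p i' * q j'))
          = ∑ i', (mask K i' j * max (φs i' + (ψs j + t) - G i' j) 0 ^ 2 * (p i' * q j)
              - mask K i' j * max (φs i' + ψs j - G i' j) 0 ^ 2 * (p i' * q j)) := by
        rw [← Finset.sum_sub_distrib]
        refine Finset.sum_congr rfl fun i' _ => ?_
        rw [← Finset.sum_sub_distrib]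
        rw [Finset.sum_eq_single_of_mem j (Finset.mem_univ j)
          (fun b _ hb => by simp [Function.update_of_ne hb])]
        simp only [Function.update_self]
      have hD : ∑ i', (mask K i' j * max (φs i' + (ψs j + t) - G i' j) 0 ^ 2 * (p i' * q j)
              - mask K i' j * max (φs i' + ψs j - G i' j) 0 ^ 2 * (p i' * q j))
          ≤ (4*ε*t) * (∑ i', Tstar K G ε p q φs ψs i' j) + t^2 * q j := by
        have hMw : ∑ i', mask K i' j * (p i' * q j) ≤ q j := by
          calc ∑ i', mask K i' j * (p i' * q j) ≤ ∑ i', 1 * (p i' * q j) :=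
                Finset.sum_le_sum fun i' _ =>
                  mul_le_mul_of_nonneg_right (hm1 i' j) (mul_pos (hp i') (hq j)).le
            _ = q j := by
                simp only [one_mul]
                have : ∀ i', p i' * q j = q j * p i' := fun i' => by ring
                rw [Finset.sum_congr rfl fun i' _ => this i', ← Finset.mul_sum, hps, mul_one]
        calc ∑ i', (mask K i' j * max (φs i' + (ψs j + t) - G i' j) 0 ^ 2 * (p i' * q j)
              - mask K i' j * max (φs i' + ψs j - G i' j) 0 ^ 2 * (p i' * q j))
            ≤ ∑ i', ((4*ε*t) * Tstar K G ε p q φs ψs i' j + t^2 * (mask K i' j * (p i' * q j))) := by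
              refine Finset.sum_le_sum fun i' _ => ?_
              have h1 := upper_q (φs i' + ψs j - G i' j) t
              have hmw : 0 ≤ mask K i' j * (p i' * q j) :=
                mul_nonneg (hmnn i' j) (mul_pos (hp i') (hq j)).le
              have hre : φs i' + (ψs j + t) - G i' j = (φs i' + ψs j - G i' j) + t := by ring
              rw [hre]
              have hT : (4*ε*t) * Tstar K G ε p q φs ψs i' j
                  = 2*t*(max (φs i' + ψs j - G i' j) 0) * (mask K i' j * (p i' * q j)) := by
                unfold Tstar; field_simp; ring
              rw [hT]
              nlinarith [mul_le_mul_of_nonneg_left h1 hmw]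
          _ = (4*ε*t) * (∑ i', Tstar K G ε p q φs ψs i' j)
              + t^2 * (∑ i', mask K i' j * (p i' * q j)) := by
              rw [Finset.sum_add_distrib, ← Finset.mul_sum, ← Finset.mul_sum]
          _ ≤ _ := by nlinarith [sq_nonneg t]
      set Dn := ∑ i', ∑ j', mask K i' j' *
          max (φs i' + Function.update ψs j (ψs j + t) j' - G i' j') 0 ^ 2 * (p i' * q j') with hDn
      set Do := ∑ i', ∑ j', mask K i' j' * max (φs i' + ψs j' - G i' j') 0 ^ 2 * (p i' * q j') with hDo
      set R := ∑ i', (mask K i' j * max (φs i' + (ψs j + t) - G i' j) 0 ^ 2 * (p i' * q j)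
              - mask K i' j * max (φs i' + ψs j - G i' j) 0 ^ 2 * (p i' * q j)) with hR
      set S := ∑ i', Tstar K G ε p q φs ψs i' j with hS
      have hkd : (1/(4*ε)) * Dn = (1/(4*ε)) * Do + (1/(4*ε)) * R := by
        have : Dn = Do + R := by linarith [e2]
        rw [this]; ring
      have step1 : t * q j ≤ (1/(4*ε)) * R := by linarith
      have step2 : (1/(4*ε)) * R ≤ (1/(4*ε)) * ((4*ε*t) * S + t^2 * q j) :=
        mul_le_mul_of_nonneg_left hD hε4.le
      have step3 : (1/(4*ε)) * ((4*ε*t) * S + t^2 * q j) = t*S + t^2 * q j * (1/(4*ε)) := by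
        field_simp
      have step4 : t^2 * q j * (1/(4*ε)) ≤ t^2 * (1/(4*ε)) := by
        nlinarith [mul_le_mul_of_nonneg_left hqjle (mul_nonneg (sq_nonneg t) hε4.le)]
      have expand : t * (q j - (∑ i, Tstar K G ε p q φs ψs i j)) = t * q j - t * S := by
        rw [hS]; ring
      linarith
    have := aux_small (1/(4*ε)) (q j - ∑ i, Tstar K G ε p q φs ψs i j) hε4 key
    linarith
  -- T is feasible
  have hTmem : Tstar K G ε p q φs ψs ∈ PiM (mask K) p q := by
    refine ⟨hTnn, fun i => ?_, fun j => ?_⟩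
    · rw [Finset.sum_congr rfl fun j _ => hTM i j]; exact hrow i
    · rw [Finset.sum_congr rfl fun i _ => hTM i j]; exact hcol j
  -- duality-gap formula
  have hgap : ∀ π, π ∈ PiM (mask K) p q →
      primObj K G ε p q π = dualObj K G ε p q φs ψs +
        ∑ i, ∑ j, ((mask K i j * π i j) * G i j - φs i * (mask K i j * π i j)
          - ψs j * (mask K i j * π i j) + ε * ((mask K i j * π i j)^2 / (p i * q j))
          + (1/(4*ε)) * (mask K i j * max (φs i + ψs j - G i j) 0 ^ 2 * (p i * q j))) := by
    intro π hπ
    obtain ⟨hpos, hr, hc⟩ := hπ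
    have e1 : ∑ i, φs i * p i = ∑ i, ∑ j, φs i * (mask K i j * π i j) :=
      Finset.sum_congr rfl fun i _ => by rw [← hr i, Finset.mul_sum]
    have e2 : ∑ j, ψs j * q j = ∑ i, ∑ j, ψs j * (mask K i j * π i j) := by
      rw [Finset.sum_comm]
      exact Finset.sum_congr rfl fun j _ => by rw [← hc j, Finset.mul_sum]
    unfold primObj dualObj
    rw [e1, e2]
    simp only [Finset.mul_sum, Finset.sum_add_distrib, Finset.sum_sub_distrib]
    ring
  -- evaluate gap at T: it is zero
  have hgapT : primObj K G ε p q (Tstar K G ε p q φs ψs) = dualObj K G ε p q φs ψs := by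
    rw [hgap _ hTmem]
    have hz : ∑ i, ∑ j, ((mask K i j * Tstar K G ε p q φs ψs i j) * G i j
        - φs i * (mask K i j * Tstar K G ε p q φs ψs i j)
        - ψs j * (mask K i j * Tstar K G ε p q φs ψs i j)
        + ε * ((mask K i j * Tstar K G ε p q φs ψs i j)^2 / (p i * q j))
        + (1/(4*ε)) * (mask K i j * max (φs i + ψs j - G i j) 0 ^ 2 * (p i * q j))) = 0 := by
      refine Finset.sum_eq_zero fun i _ => Finset.sum_eq_zero fun j _ => ?_
      rcases hm01 i j with hM | hM
      · simp [hM, Tstar]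
      · rw [hTM i j]
        have hT1 : Tstar K G ε p q φs ψs i j
            = (1/(2*ε)) * max (φs i + ψs j - G i j) 0 * (p i * q j) := by
          simp [Tstar, hM]
        rw [hT1, hM, one_mul]
        exact point_eq ε (p i * q j) (φs i) (ψs j) (G i j) hε (mul_pos (hp i) (hq j))
    rw [hz, add_zero]
  -- gap is nonnegative for any feasible π
  have hgapnn : ∀ π, π ∈ PiM (mask K) p q →
      dualObj K G ε p q φs ψs ≤ primObj K G ε p q π := by
    intro π hπ
    rw [hgap _ hπ]
    have hz : 0 ≤ ∑ i, ∑ j, ((mask K i j * π i j) * G i j - φs i * (mask K i j * π i j)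
        - ψs j * (mask K i j * π i j) + ε * ((mask K i j * π i j)^2 / (p i * q j))
        + (1/(4*ε)) * (mask K i j * max (φs i + ψs j - G i j) 0 ^ 2 * (p i * q j))) := by
      refine Finset.sum_nonneg fun i _ => Finset.sum_nonneg fun j _ => ?_
      rcases hm01 i j with hM | hM
      · simp [hM]
      · rw [hM, one_mul, one_mul]
        exact point_ineq ε (p i * q j) (φs i) (ψs j) (G i j) (π i j) hε
          (mul_pos (hp i) (hq j)) (hπ.1 i j)
    linarith
  refine ⟨⟨Tstar K G ε p q φs ψs, hTmem, ?_, fun i j => (hTM i j).symm⟩, hrow, hcol⟩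
  intro π' hπ'
  rw [hgapT]
  exact hgapnn π' hπ'
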